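/- In the VPG construction setup: let u = b_i and v = b_j be distinct leaves. Then u and v are consecutive leaves (i.e., |i − j| = 1 or {i, j} = {0, k−1}) if and only if either (a) l_x(u) ∈ [l_x(v), r_x(v)] and l_y(v) ∈ [l_y(u), r_y(u)], or (b) l_x(v) ∈ [l_x(u), r_x(u)] and l_y(u) ∈ [l_y(v), r_y(v)]. -/
import Mathlib


open SimpleGraph Set Function

/-- `u` is an ancestor of `v` with respect to root `r`:
`u` lies on the unique path in `T` from `r` to `v`. -/
def IsAncestor {V : Type*} (T : SimpleGraph V) (r u v : V) : Prop :=
  ∀ p : T.Walk r v, p.IsPath → u ∈ p.support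

/-- `u` is the parent of `v` with respect to root `r`. -/
def IsParent {V : Type*} (T : SimpleGraph V) (r u v : V) : Prop :=
  IsAncestor T r u v ∧ u ≠ v ∧ T.Adj u v

/-- `L^r(u)`: the set of leaves of `T` that are descendants of `u`. -/
def LeafSet {V : Type*} (T : SimpleGraph V) [Fintype V] [DecidableRel T.Adj] (r u : V) :
    Set V :=
  {c | T.degree c = 1 ∧ IsAncestor T r u c}

/-- The leaf `c_{j mod k}` index. -/
def cidx {k : ℕ} (hk : 0 < k) (j : ℕ) : Fin k := ⟨j % k, Nat.mod_lt _ hk⟩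

/-- A set `A` of leaves is cyclically consecutive with respect to the enumeration `c`. -/
def CycConsec {V : Type*} {k : ℕ} (hk : 0 < k) (c : Fin k → V) (A : Set V) : Prop :=
  ∃ j m : ℕ, A = {x | ∃ t ≤ m, x = c (cidx hk (j + t))}

/-- two distinct leaves are consecutive iff their L-shapes satisfy
condition (a) or condition (b). -/
theorem stmt10
    {V : Type*} [Fintype V] (T : SimpleGraph V) [DecidableRel T.Adj]
    (hT : T.IsTree) {k : ℕ} (hk : 3 ≤ k) (b : Fin k → V)
    (hinj : Function.Injective b)
    (hleaf : ∀ v : V, T.degree v = 1 ↔ ∃ i : Fin k, v = b i)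
    (r' : V) (hr' : 2 ≤ T.degree r')
    (hconsec : ∀ u : V, 2 ≤ T.degree u → ∃ s t : Fin k, s ≤ t ∧
        LeafSet T r' u = {x | ∃ j : Fin k, s ≤ j ∧ j ≤ t ∧ x = b j})
    (hpath0 : ∀ p : T.Walk (b ⟨0, by omega⟩) r', p.IsPath →
        ∀ w ∈ p.support, w ≠ b ⟨0, by omega⟩ → w ≠ r' → ∃ z : V, LeafSet T r' w = {z})
    (hpath1 : ∀ p : T.Walk (b ⟨1, by omega⟩) r', p.IsPath →
        ∀ w ∈ p.support, w ≠ b ⟨1, by omega⟩ → w ≠ r' → ∃ z : V, LeafSet T r' w = {z})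
    (h : ℕ) (hmax : IsGreatest (Set.range fun u : V => T.dist r' u) h)
    (lx rx ly ry : V → ℝ)
    (hb0 : lx (b ⟨0, by omega⟩) = 1.5 ∧ rx (b ⟨0, by omega⟩) = (k : ℝ) - 1 ∧
      ly (b ⟨0, by omega⟩) = 0 ∧
      ry (b ⟨0, by omega⟩) = (h : ℝ) - (T.dist r' (b ⟨0, by omega⟩) : ℝ) + 2)
    (hb1 : lx (b ⟨1, by omega⟩) = 1 ∧ rx (b ⟨1, by omega⟩) = 2 ∧
      ly (b ⟨1, by omega⟩) = 1 ∧
      ry (b ⟨1, by omega⟩) = (h : ℝ) - (T.dist r' (b ⟨1, by omega⟩) : ℝ) + 2)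
    (hbk : lx (b ⟨k - 1, by omega⟩) = (k : ℝ) - 1 ∧ rx (b ⟨k - 1, by omega⟩) = (k : ℝ) ∧
      ly (b ⟨k - 1, by omega⟩) = 0 ∧
      ry (b ⟨k - 1, by omega⟩) = (h : ℝ) - (T.dist r' (b ⟨k - 1, by omega⟩) : ℝ) + 2)
    (hbi : ∀ i : Fin k, 2 ≤ (i : ℕ) → (i : ℕ) ≤ k - 2 →
      lx (b i) = ((i : ℕ) : ℝ) ∧ rx (b i) = ((i : ℕ) : ℝ) + 1 ∧ ly (b i) = 1 ∧
      ry (b i) = (h : ℝ) - (T.dist r' (b i) : ℝ) + 2)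
    (hintv : ∀ v : V, 2 ≤ T.degree v →
      lx v = sInf (lx '' LeafSet T r' v) ∧ rx v = sSup (lx '' LeafSet T r' v) ∧
      ly v = (h : ℝ) - (T.dist r' v : ℝ) + 1 ∧ ry v = (h : ℝ) - (T.dist r' v : ℝ) + 2)
    :
    ∀ i j : Fin k, i ≠ j →
      ((((i : ℕ) + 1 = (j : ℕ) ∨ (j : ℕ) + 1 = (i : ℕ)) ∨
        ((i : ℕ) = 0 ∧ (j : ℕ) = k - 1) ∨ ((j : ℕ) = 0 ∧ (i : ℕ) = k - 1)) ↔
        ((lx (b i) ∈ Set.Icc (lx (b j)) (rx (b j)) ∧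
            ly (b j) ∈ Set.Icc (ly (b i)) (ry (b i))) ∨
          (lx (b j) ∈ Set.Icc (lx (b i)) (rx (b i)) ∧
            ly (b i) ∈ Set.Icc (ly (b j)) (ry (b j))))) := by

  intro i j hij
  have hij' : (i : ℕ) ≠ (j : ℕ) := fun hh => hij (Fin.ext hh)
  have hdist : ∀ u : V, (T.dist r' u : ℝ) ≤ (h : ℝ) := by
    intro u
    exact_mod_cast hmax.2 ⟨u, rfl⟩
  have hk3 : (3 : ℝ) ≤ (k : ℝ) := by exact_mod_cast hk
  have classify : ∀ i : Fin k,
      ((i : ℕ) = 0 ∧ lx (b i) = 1.5 ∧ rx (b i) = (k : ℝ) - 1 ∧ ly (b i) = 0 ∧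
        2 ≤ ry (b i)) ∨
      ((i : ℕ) = 1 ∧ lx (b i) = 1 ∧ rx (b i) = 2 ∧ ly (b i) = 1 ∧ 2 ≤ ry (b i)) ∨
      ((i : ℕ) = k - 1 ∧ lx (b i) = (k : ℝ) - 1 ∧ rx (b i) = (k : ℝ) ∧ ly (b i) = 0 ∧
        2 ≤ ry (b i)) ∨
      (2 ≤ (i : ℕ) ∧ (i : ℕ) ≤ k - 2 ∧ lx (b i) = ((i : ℕ) : ℝ) ∧
        rx (b i) = ((i : ℕ) : ℝ) + 1 ∧ ly (b i) = 1 ∧ 2 ≤ ry (b i)) := by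
    intro i
    by_cases h0 : (i : ℕ) = 0
    · left
      have hi : i = ⟨0, by omega⟩ := Fin.ext h0
      rw [hi]
      refine ⟨rfl, hb0.1, hb0.2.1, hb0.2.2.1, ?_⟩
      rw [hb0.2.2.2]
      have := hdist (b ⟨0, by omega⟩)
      linarith
    by_cases h1 : (i : ℕ) = 1
    · right; left
      have hi : i = ⟨1, by omega⟩ := Fin.ext h1
      rw [hi]
      refine ⟨rfl, hb1.1, hb1.2.1, hb1.2.2.1, ?_⟩
      rw [hb1.2.2.2]
      have := hdist (b ⟨1, by omega⟩)
      linarith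
    by_cases hklast : (i : ℕ) = k - 1
    · right; right; left
      have hi : i = ⟨k - 1, by omega⟩ := Fin.ext hklast
      rw [hi]
      refine ⟨rfl, hbk.1, hbk.2.1, hbk.2.2.1, ?_⟩
      rw [hbk.2.2.2]
      have := hdist (b ⟨k - 1, by omega⟩)
      linarith
    · right; right; right
      have hilt : (i : ℕ) < k := i.isLt
      have h2 : 2 ≤ (i : ℕ) := by omega
      have h2' : (i : ℕ) ≤ k - 2 := by omega
      obtain ⟨e1, e2, e3, e4⟩ := hbi i h2 h2'
      refine ⟨h2, h2', e1, e2, e3, ?_⟩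
      rw [e4]
      have := hdist (b i)
      linarith
  simp only [Set.mem_Icc]
  rcases classify i with ⟨hi, il, ir, iy, iry⟩ | ⟨hi, il, ir, iy, iry⟩ |
      ⟨hi, il, ir, iy, iry⟩ | ⟨hi1, hi2, il, ir, iy, iry⟩ <;>
    rcases classify j with ⟨hj, jl, jr, jy, jry⟩ | ⟨hj, jl, jr, jy, jry⟩ |
        ⟨hj, jl, jr, jy, jry⟩ | ⟨hj1, hj2, jl, jr, jy, jry⟩ <;>
    rw [il, ir, iy, jl, jr, jy]
  -- i = 0 cases
  · exact absurd (hi.trans hj.symm) hij'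
  · -- A,B
    constructor
    · intro _
      exact Or.inl ⟨⟨by norm_num, by norm_num⟩, ⟨by norm_num, by linarith⟩⟩
    · intro _; omega
  · -- A,Z
    constructor
    · intro _
      exact Or.inr ⟨⟨by linarith, le_refl _⟩, ⟨le_refl _, by linarith⟩⟩
    · intro _; omega
  · -- A,M
    have jge : (2 : ℝ) ≤ ((j : ℕ) : ℝ) := by exact_mod_cast hj1
    constructor
    · intro hL; exfalso; omega
    · rintro (⟨⟨a1, a2⟩, _⟩ | ⟨_, ⟨c1, c2⟩⟩) <;> exfalso
      · linarith
      · linarith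
  -- i = 1 cases
  · -- B,A
    constructor
    · intro _
      exact Or.inr ⟨⟨by norm_num, by norm_num⟩, ⟨by norm_num, by linarith⟩⟩
    · intro _; omega
  · exact absurd (hi.trans hj.symm) hij'
  · -- B,Z
    constructor
    · intro hL
      have hk3' : k = 3 := by omega
      have hkr : (k : ℝ) = 3 := by exact_mod_cast hk3'
      exact Or.inr ⟨⟨by linarith, by linarith⟩, ⟨by norm_num, by linarith⟩⟩
    · rintro (⟨⟨a1, a2⟩, _⟩ | ⟨⟨b1, b2⟩, _⟩)
      · exfalso; linarith
      · have : (k : ℝ) ≤ 3 := by linarith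
        have hkn : k ≤ 3 := by exact_mod_cast this
        omega
  · -- B,M
    have jge : (2 : ℝ) ≤ ((j : ℕ) : ℝ) := by exact_mod_cast hj1
    constructor
    · intro hL
      have hj2' : (j : ℕ) = 2 := by omega
      have hjr : ((j : ℕ) : ℝ) = 2 := by exact_mod_cast hj2'
      exact Or.inr ⟨⟨by linarith, by linarith⟩, ⟨le_refl _, by linarith⟩⟩
    · rintro (⟨⟨a1, a2⟩, _⟩ | ⟨⟨b1, b2⟩, _⟩)
      · exfalso; linarith
      · have : ((j : ℕ) : ℝ) ≤ 2 := b2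
        have hjn : (j : ℕ) ≤ 2 := by exact_mod_cast this
        omega
  -- i = k-1 cases
  · -- Z,A
    constructor
    · intro _
      exact Or.inl ⟨⟨by linarith, le_refl _⟩, ⟨le_refl _, by linarith⟩⟩
    · intro _; omega
  · -- Z,B
    constructor
    · intro hL
      have hk3' : k = 3 := by omega
      have hkr : (k : ℝ) = 3 := by exact_mod_cast hk3'
      exact Or.inl ⟨⟨by linarith, by linarith⟩, ⟨by norm_num, by linarith⟩⟩
    · rintro (⟨⟨a1, a2⟩, _⟩ | ⟨⟨b1, b2⟩, _⟩)
      · have : (k : ℝ) ≤ 3 := by linarith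
        have hkn : k ≤ 3 := by exact_mod_cast this
        omega
      · exfalso; linarith
  · exact absurd (hi.trans hj.symm) hij'
  · -- Z,M
    have jge : (2 : ℝ) ≤ ((j : ℕ) : ℝ) := by exact_mod_cast hj1
    constructor
    · intro hL
      have hj2' : (j : ℕ) + 2 = k := by omega
      have hjr : ((j : ℕ) : ℝ) + 2 = (k : ℝ) := by exact_mod_cast hj2'
      exact Or.inl ⟨⟨by linarith, by linarith⟩, ⟨by norm_num, by linarith⟩⟩
    · rintro (⟨⟨a1, a2⟩, _⟩ | ⟨⟨b1, b2⟩, _⟩)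
      · have : (k : ℝ) ≤ ((j : ℕ) : ℝ) + 2 := by linarith
        have hkn : k ≤ (j : ℕ) + 2 := by exact_mod_cast this
        omega
      · have hjk : (j : ℕ) + 2 ≤ k := by omega
        have : ((j : ℕ) : ℝ) + 2 ≤ (k : ℝ) := by exact_mod_cast hjk
        exfalso; linarith
  -- i middle (M) cases
  · -- M,A
    have ige : (2 : ℝ) ≤ ((i : ℕ) : ℝ) := by exact_mod_cast hi1
    constructor
    · intro hL; exfalso; omega
    · rintro (⟨_, ⟨c1, c2⟩⟩ | ⟨⟨a1, a2⟩, _⟩) <;> exfalso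
      · linarith
      · linarith
  · -- M,B
    have ige : (2 : ℝ) ≤ ((i : ℕ) : ℝ) := by exact_mod_cast hi1
    constructor
    · intro hL
      have hi2' : (i : ℕ) = 2 := by omega
      have hir : ((i : ℕ) : ℝ) = 2 := by exact_mod_cast hi2'
      exact Or.inl ⟨⟨by linarith, by linarith⟩, ⟨le_refl _, by linarith⟩⟩
    · rintro (⟨⟨a1, a2⟩, _⟩ | ⟨⟨b1, b2⟩, _⟩)
      · have hin : (i : ℕ) ≤ 2 := by exact_mod_cast a2
        omega
      · exfalso; linarith
  · -- M,Z
    have ige : (2 : ℝ) ≤ ((i : ℕ) : ℝ) := by exact_mod_cast hi1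
    constructor
    · intro hL
      have hi2' : (i : ℕ) + 2 = k := by omega
      have hir : ((i : ℕ) : ℝ) + 2 = (k : ℝ) := by exact_mod_cast hi2'
      exact Or.inr ⟨⟨by linarith, by linarith⟩, ⟨by norm_num, by linarith⟩⟩
    · rintro (⟨⟨a1, a2⟩, _⟩ | ⟨⟨b1, b2⟩, _⟩)
      · have hik : (i : ℕ) + 2 ≤ k := by omega
        have : ((i : ℕ) : ℝ) + 2 ≤ (k : ℝ) := by exact_mod_cast hik
        exfalso; linarith
      · have : (k : ℝ) ≤ ((i : ℕ) : ℝ) + 2 := by linarith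
        have hkn : k ≤ (i : ℕ) + 2 := by exact_mod_cast this
        omega
  · -- M,M
    have ige : (2 : ℝ) ≤ ((i : ℕ) : ℝ) := by exact_mod_cast hi1
    have jge : (2 : ℝ) ≤ ((j : ℕ) : ℝ) := by exact_mod_cast hj1
    constructor
    · rintro ((hc | hc) | (⟨h1, h2⟩ | ⟨h1, h2⟩))
      · have hcr : ((i : ℕ) : ℝ) + 1 = ((j : ℕ) : ℝ) := by exact_mod_cast hc
        exact Or.inr ⟨⟨by linarith, by linarith⟩, ⟨le_refl _, by linarith⟩⟩
      · have hcr : ((j : ℕ) : ℝ) + 1 = ((i : ℕ) : ℝ) := by exact_mod_cast hc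
        exact Or.inl ⟨⟨by linarith, by linarith⟩, ⟨le_refl _, by linarith⟩⟩
      · exfalso; omega
      · exfalso; omega
    · rintro (⟨⟨a1, a2⟩, _⟩ | ⟨⟨b1, b2⟩, _⟩)
      · have h1 : (j : ℕ) ≤ (i : ℕ) := by exact_mod_cast a1
        have h2 : (i : ℕ) ≤ (j : ℕ) + 1 := by exact_mod_cast a2
        omega
      · have h1 : (i : ℕ) ≤ (j : ℕ) := by exact_mod_cast b1
        have h2 : (j : ℕ) ≤ (i : ℕ) + 1 := by exact_mod_cast b2
        omega
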